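/- Semigroup characterization (Euclidean converse): suppose u : ℝ × ℝ × ℝ^d → ℝ^d is continuous in all arguments, differentiable in t, satisfies the boundary condition u(s,s,y) = v(s,y) for a given continuous vector field v, and satisfies the semigroup condition Φ(s,t) = Φ(r,t) ∘ Φ(s,r) for all s, r, t, where Φ(s,t)(y) := y + (t−s)·u(s,t,y). Then for every y and every s, the curve t ↦ Φ(s,t)(y) solves the ODE d/dt Φ(s,t)(y) = v(t, Φ(s,t)(y)) with initial condition Φ(s,s)(y) = y. -/
import Mathlib

/-- Semigroup characterization (Euclidean converse): boundary condition plus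
semigroup consistency force the induced flow map `Φ s t y = y + (t - s) • u s t y`
to solve the ODE of the vector field `v`. -/
theorem stmt_5 (d : ℕ)
    (u u' : ℝ → ℝ → EuclideanSpace ℝ (Fin d) → EuclideanSpace ℝ (Fin d))
    (v : ℝ → EuclideanSpace ℝ (Fin d) → EuclideanSpace ℝ (Fin d))
    (hucont : Continuous fun p : ℝ × ℝ × EuclideanSpace ℝ (Fin d) => u p.1 p.2.1 p.2.2)
    (hvcont : Continuous fun p : ℝ × EuclideanSpace ℝ (Fin d) => v p.1 p.2)
    (hudiff : ∀ s t y, HasDerivAt (fun τ => u s τ y) (u' s t y) t)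
    (hbdry : ∀ s y, u s s y = v s y)
    (hsemi : ∀ s r t y,
      (y + (r - s) • u s r y) + (t - r) • u r t (y + (r - s) • u s r y)
        = y + (t - s) • u s t y) :
    ∀ s y, (y + (s - s) • u s s y = y) ∧
      ∀ t, HasDerivAt (fun τ => y + (τ - s) • u s τ y)
        (v t (y + (t - s) • u s t y)) t := by
  intro s y
  constructor
  · simp
  · intro t
    set x := y + (t - s) • u s t y with hx
    have hfun : (fun τ => y + (τ - s) • u s τ y)
        = fun τ => x + (τ - t) • u t τ x := by
      funext τ
      rw [← hsemi s t τ y]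
    rw [hfun]
    have h1 : HasDerivAt (fun τ : ℝ => τ - t) 1 t := by
      simpa using (hasDerivAt_id t).sub_const t
    have h2 : HasDerivAt (fun τ => (τ - t) • u t τ x)
        ((t - t) • u' t t x + (1 : ℝ) • u t t x) t :=
      h1.smul (hudiff t t x)
    have h3 := (h2.const_add x)
    simpa [hbdry] using h3
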